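/- Let w > 0, L > 0, and let v : ℝ → ℝ be a continuously differentiable L-periodic function that is not identically zero. Then S_w(τ v) → −∞ as τ → +∞. -/

import Mathlib

/-!
Since `cosh t ≥ t⁴/48`, the action along the ray is bounded above by
`A τ² − B τ⁴ + L/w` with `A = ∫₀^L v'²/2` and `B = (∫₀^L v⁴)/(48 w)`.
The constant `B` is positive because `v⁴` is continuous, nonnegative and not identically zero,
so the quartic term wins.
-/

open Real MeasureTheory Filter Set Function

theorem Real.pow_four_div_le_cosh (x : ℝ) : x ^ 4 / 48 ≤ cosh x := by
  have hexp : |x| ^ 4 / 24 ≤ exp |x| := by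
    simpa [Nat.factorial] using pow_div_factorial_le_exp |x| (abs_nonneg x) 4
  have htwo : exp |x| ≤ 2 * cosh x := by
    rw [cosh_eq]; linarith [exp_abs_le x]
  rw [Even.pow_abs ⟨2, rfl⟩] at hexp
  linarith

theorem tendsto_mul_sq_sub_mul_pow_four_add_atBot (a b c : ℝ) (hb : 0 < b) :
    Tendsto (fun τ : ℝ => a * τ ^ 2 - b * τ ^ 4 + c) atTop atBot := by
  have hsq : Tendsto (fun τ : ℝ => τ ^ 2) atTop atTop := tendsto_pow_atTop two_ne_zero
  have hfactor : Tendsto (fun τ : ℝ => a + -(b * τ ^ 2)) atTop atBot :=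
    tendsto_atBot_add_const_left _ a (tendsto_neg_atTop_atBot.comp (hsq.const_mul_atTop hb))
  refine tendsto_atBot_add_const_right _ c ((hsq.atTop_mul_atBot₀ hfactor).congr fun τ => ?_)
  ring

theorem Continuous.intervalIntegral_pos_of_pos_at {g : ℝ → ℝ} {a b x₀ : ℝ} (hg : Continuous g)
    (hnonneg : ∀ x, 0 ≤ g x) (hx₀ : x₀ ∈ Ioo a b) (hpos : 0 < g x₀) :
    0 < ∫ x in a..b, g x := by
  have hopen : IsOpen (support g ∩ Ioo a b) := hg.isOpen_support.inter isOpen_Ioo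
  have hsub : support g ∩ Ioo a b ⊆ support g ∩ Ioc a b :=
    inter_subset_inter_right _ Ioo_subset_Ioc_self
  rw [intervalIntegral.integral_pos_iff_support_of_nonneg_ae (.of_forall hnonneg)
    (hg.intervalIntegrable a b)]
  exact ⟨hx₀.1.trans hx₀.2,
    (hopen.measure_pos volume ⟨x₀, hpos.ne', hx₀⟩).trans_le (measure_mono hsub)⟩

theorem Function.Periodic.intervalIntegral_pos_of_pos_at {g : ℝ → ℝ} {L x₀ : ℝ}
    (hper : Periodic g L) (hL : 0 < L) (hg : Continuous g) (hnonneg : ∀ x, 0 ≤ g x)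
    (hpos : 0 < g x₀) : 0 < ∫ x in (0 : ℝ)..L, g x := by
  have hshift := hper.intervalIntegral_add_eq (x₀ - L / 2) 0
  rw [zero_add] at hshift
  rw [← hshift]
  exact hg.intervalIntegral_pos_of_pos_at hnonneg ⟨by linarith, by linarith⟩ hpos

theorem integral_action_ray_le {v : ℝ → ℝ} (hv : ContDiff ℝ 1 v) {w a b : ℝ} (hw : 0 < w)
    (hab : a ≤ b) (τ : ℝ) :
    ∫ x in a..b, ((deriv (fun y => τ * v y) x) ^ 2 / 2 - cosh (τ * v x) / w + 1 / w) ≤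
      (∫ x in a..b, deriv v x ^ 2 / 2) * τ ^ 2 - (∫ x in a..b, v x ^ 4) / (48 * w) * τ ^ 4
        + (b - a) / w := by
  have hv' : Continuous (deriv v) := hv.continuous_deriv le_rfl
  have hkin : IntervalIntegrable (fun x => τ ^ 2 * (deriv v x ^ 2 / 2)) volume a b :=
    (by fun_prop : Continuous fun x => τ ^ 2 * (deriv v x ^ 2 / 2)).intervalIntegrable a b
  have hquart : IntervalIntegrable (fun x => τ ^ 4 / (48 * w) * v x ^ 4) volume a b :=
    (hv.continuous.pow 4 |>.const_mul _).intervalIntegrable a b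
  simp only [deriv_const_mul_field']
  calc _ ≤ ∫ x in a..b, (τ ^ 2 * (deriv v x ^ 2 / 2) - τ ^ 4 / (48 * w) * v x ^ 4 + 1 / w) := by
        refine intervalIntegral.integral_mono_on hab
          ((by fun_prop : Continuous _).intervalIntegrable a b)
          ((by fun_prop : Continuous _).intervalIntegrable a b) fun x _ => ?_
        have hcosh : (τ * v x) ^ 4 / 48 / w ≤ cosh (τ * v x) / w :=
          div_le_div_of_nonneg_right (pow_four_div_le_cosh _) hw.le
        field_simp at hcosh ⊢
        nlinarith
    _ = _ := by
        rw [intervalIntegral.integral_add (hkin.sub hquart) intervalIntegrable_const,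
          intervalIntegral.integral_sub hkin hquart, intervalIntegral.integral_const_mul,
          intervalIntegral.integral_const_mul, intervalIntegral.integral_const, smul_eq_mul]
        ring

theorem action_tendsto_atBot_along_rays
    (w L : ℝ) (hw : 0 < w) (hL : 0 < L) (v : ℝ → ℝ)
    (hv : ContDiff ℝ 1 v) (hper : ∀ x, v (x + L) = v x)
    (hne : ∃ x : ℝ, v x ≠ 0) :
    Tendsto (fun τ : ℝ => ∫ x in (0:ℝ)..L,
        ((deriv (fun y => τ * v y) x)^2 / 2 - Real.cosh (τ * v x) / w + 1 / w))
      atTop atBot := by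
  obtain ⟨x₀, hx₀⟩ := hne
  have hper4 : Periodic (fun x => v x ^ 4) L := fun x => by simp only [hper]
  have hquartic : 0 < ∫ x in (0 : ℝ)..L, v x ^ 4 :=
    hper4.intervalIntegral_pos_of_pos_at hL (hv.continuous.pow 4) (fun x => by positivity)
      (by positivity)
  refine tendsto_atBot_mono (integral_action_ray_le hv hw hL.le)
    (tendsto_mul_sq_sub_mul_pow_four_add_atBot _ _ _ ?_)
  positivity
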